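/- Let S be a nonempty compact topological space and g : ℝⁿ × S → ℝ such that g(·, δ) is differentiable for every δ ∈ S and (θ, δ) ↦ ∇_θ g(θ, δ) is continuous. Then the max-function φ(θ) = max_{δ ∈ S} g(θ, δ) is locally Lipschitz continuous on ℝⁿ. -/
import Mathlib


set_option maxHeartbeats 1000000 in
/-- Danskin: under the hypotheses (S nonempty compact, g(·,δ) differentiable, ∇_θ g jointly
continuous), the max-function φ(θ) = max_{δ∈S} g(θ,δ) is locally Lipschitz. -/
theorem danskin_locallyLipschitz {n : ℕ} {S : Type*} [TopologicalSpace S] [CompactSpace S]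
    [Nonempty S] (g : (Fin n → ℝ) → S → ℝ)
    (hdiff : ∀ δ : S, Differentiable ℝ (fun θ => g θ δ))
    (hgrad : Continuous (fun p : (Fin n → ℝ) × S => fderiv ℝ (fun θ => g θ p.2) p.1)) :
    LocallyLipschitz (fun θ : Fin n → ℝ => ⨆ δ : S, g θ δ) := by
  intro θ₀
  -- bound the gradient on closedBall θ₀ 1 × S by compactness
  obtain ⟨⟨θm, δm⟩, hm, hC⟩ :=
    ((isCompact_closedBall θ₀ 1).prod isCompact_univ).exists_isMaxOn
      ⟨⟨θ₀, Classical.arbitrary S⟩, by simp⟩ (hgrad.norm).continuousOn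
  set C : ℝ := ‖fderiv ℝ (fun θ => g θ δm) θm‖ with hCdef
  have hC0 : 0 ≤ C := norm_nonneg _
  have hbound : ∀ θ ∈ Metric.closedBall θ₀ 1, ∀ δ : S,
      ‖fderiv ℝ (fun θ => g θ δ) θ‖ ≤ C := fun θ hθ δ =>
    hC (Set.mk_mem_prod hθ (Set.mem_univ δ))
  have hlip : ∀ δ : S, ∀ θ ∈ Metric.closedBall θ₀ 1, ∀ θ' ∈ Metric.closedBall θ₀ 1,
      |g θ δ - g θ' δ| ≤ C * dist θ θ' := by
    intro δ θ hθ θ' hθ'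
    have := (convex_closedBall θ₀ 1).norm_image_sub_le_of_norm_fderiv_le
      (f := fun θ => g θ δ) (fun x _ => (hdiff δ x)) (fun x hx => hbound x hx δ) hθ' hθ
    simpa [Real.norm_eq_abs, dist_eq_norm] using this
  by_cases hbdd : BddAbove (Set.range (fun δ : S => g θ₀ δ))
  · -- bounded case: the sup is finite on the ball and C-Lipschitz there
    have hbdd' : ∀ θ ∈ Metric.closedBall θ₀ 1, BddAbove (Set.range (fun δ : S => g θ δ)) := by
      intro θ hθ
      obtain ⟨M, hM⟩ := hbdd
      refine ⟨M + C * dist θ θ₀, ?_⟩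
      rintro _ ⟨δ, rfl⟩
      have h1 := hlip δ θ hθ θ₀ (by simp)
      have h2 := hM ⟨δ, rfl⟩
      simp only at h2 ⊢
      have := abs_le.1 h1
      linarith [this.2]
    refine ⟨C.toNNReal, Metric.ball θ₀ 1, Metric.ball_mem_nhds θ₀ one_pos, ?_⟩
    apply LipschitzOnWith.of_dist_le_mul
    intro θ hθ θ' hθ'
    have hθc := Metric.ball_subset_closedBall hθ
    have hθ'c := Metric.ball_subset_closedBall hθ'
    have key : ∀ x ∈ Metric.closedBall θ₀ 1, ∀ y ∈ Metric.closedBall θ₀ 1,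
        (⨆ δ : S, g x δ) - (⨆ δ : S, g y δ) ≤ C * dist x y := by
      intro x hx y hy
      rw [sub_le_iff_le_add]
      refine ciSup_le fun δ => ?_
      have h1 := (abs_le.1 (hlip δ x hx y hy)).2
      have h2 : g y δ ≤ ⨆ δ : S, g y δ := le_ciSup (hbdd' y hy) δ
      linarith
    rw [Real.dist_eq, Real.coe_toNNReal _ hC0]
    rcases abs_sub_le_iff.2 ⟨key θ hθc θ' hθ'c, by
      simpa [dist_comm] using key θ' hθ'c θ hθc⟩ with h
    exact h
  · -- unbounded case: the sup is the junk value 0 on the whole ball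
    have hall : ∀ θ ∈ Metric.closedBall θ₀ 1, ¬BddAbove (Set.range (fun δ : S => g θ δ)) := by
      intro θ hθ ⟨M, hM⟩
      apply hbdd
      refine ⟨M + C * dist θ₀ θ, ?_⟩
      rintro _ ⟨δ, rfl⟩
      have h1 := hlip δ θ₀ (by simp) θ hθ
      have h2 := hM ⟨δ, rfl⟩
      simp only at h2 ⊢
      have := abs_le.1 h1
      linarith [this.2]
    refine ⟨1, Metric.ball θ₀ 1, Metric.ball_mem_nhds θ₀ one_pos, ?_⟩
    apply LipschitzOnWith.of_dist_le_mul
    intro θ hθ θ' hθ'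
    rw [Real.iSup_of_not_bddAbove (hall θ (Metric.ball_subset_closedBall hθ)),
      Real.iSup_of_not_bddAbove (hall θ' (Metric.ball_subset_closedBall hθ'))]
    simp [dist_nonneg]
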